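/- arXiv:2303.11974 — 8 statements merged into one kernel-verified Lean document; each statement's English description precedes it below -/
import Mathlib

section
/- Let a, b, c, d, and e be positive integers, with c prime, satisfying a² + a + 1 = c·d, b² + b + 1 = c·e, and c > d > e. Then c = a + b + 1 and a − b = d − e. -/
/-! Since `a² < c·d < c²`, both `a` and `b` lie below `c`. Subtracting the two equations gives
`(a - b)(a + b + 1) = c (d - e)`. The prime `c` cannot divide `a - b`, which is nonzero and smaller
than `c` in absolute value, so it divides `a + b + 1 < 2c`, forcing `c = a + b + 1`; cancelling `c`
then gives `a - b = d - e`. -/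

lemma lt_of_sq_add_add_one_eq_mul {a c d : ℕ} (h : a ^ 2 + a + 1 = c * d) (hdc : d < c) :
    a < c := by
  nlinarith

lemma Nat.Prime.eq_add_add_one_of_dvd_mul {p a b : ℕ} (hp : p.Prime) (hap : a < p) (hbp : b < p)
    (hab : a ≠ b) (hdvd : (p : ℤ) ∣ ((a : ℤ) - b) * (a + b + 1)) : p = a + b + 1 := by
  rcases (Nat.prime_iff_prime_int.mp hp).dvd_mul.mp hdvd with hsub | hsum
  · have habs : |(a : ℤ) - b| < p := abs_sub_lt_iff.mpr ⟨by omega, by omega⟩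
    exact absurd (Int.eq_zero_of_abs_lt_dvd hsub habs) (by omega)
  · have hsum : p ∣ a + b + 1 := by exact_mod_cast hsum
    exact (Nat.eq_of_dvd_of_lt_two_mul (by omega) hsum (by omega)).symm

theorem key_factorization_lemma_general (a b c d e : ℕ) (hc : c.Prime) (h1 : a ^ 2 + a + 1 = c * d)
    (h2 : b ^ 2 + b + 1 = c * e) (hcd : c > d) (hde : d > e) :
    c = a + b + 1 ∧ (a : ℤ) - b = (d : ℤ) - e := by
  have hac : a < c := lt_of_sq_add_add_one_eq_mul h1 hcd
  have hbc : b < c := lt_of_sq_add_add_one_eq_mul h2 (hde.trans hcd)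
  have hab : a ≠ b := by
    rintro rfl
    exact hde.ne' (Nat.eq_of_mul_eq_mul_left hc.pos (h1.symm.trans h2))
  have hdiff : ((a : ℤ) - b) * (a + b + 1) = c * ((d : ℤ) - e) := by
    have h1' : (a : ℤ) ^ 2 + a + 1 = c * d := by exact_mod_cast h1
    have h2' : (b : ℤ) ^ 2 + b + 1 = c * e := by exact_mod_cast h2
    linear_combination h1' - h2'
  have hceq : c = a + b + 1 := hc.eq_add_add_one_of_dvd_mul hac hbc hab ⟨_, hdiff⟩
  refine ⟨hceq, mul_left_cancel₀ (Int.natCast_ne_zero.mpr hc.ne_zero) ?_⟩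
  rw [← hdiff, hceq]
  push_cast
  ring

/-- If `a, b, c, d, e` are positive integers, `c` prime, `a² + a + 1 = c·d`,
`b² + b + 1 = c·e`, and `c > d > e`, then `c = a + b + 1` and `a − b = d − e`. -/
theorem key_factorization_lemma (a b c d e : ℕ) (ha : 0 < a) (hb : 0 < b) (hd : 0 < d)
    (he : 0 < e) (hc : c.Prime) (h1 : a ^ 2 + a + 1 = c * d) (h2 : b ^ 2 + b + 1 = c * e)
    (hcd : c > d) (hde : d > e) :
    c = a + b + 1 ∧ (a : ℤ) - b = (d : ℤ) - e :=
  key_factorization_lemma_general a b c d e hc h1 h2 hcd hde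
end

section
/- Let a, b, c, and d be positive integers with c > d > 1 and c prime. If a² + a + 1 = c·d and b² + b + 1 = c, then a = b²; in particular, a is not prime. -/
/-!
Modulo `c` both `a` and `b` are roots of `x² + x + 1`, and
`(a² + a + 1) - (b² + b + 1) = (a - b)(a + b + 1)`. As `c` is prime and `a, b < c`
(because `a² < c d < c²`), either `a = b`, which `d > 1` excludes, or `a + b + 1 = c = b² + b + 1`.
-/

theorem Nat.eq_or_add_add_one_eq_of_modEq {p a b : ℕ} (hp : p.Prime) (ha : a < p) (hb : b < p)
    (h : a ^ 2 + a + 1 ≡ b ^ 2 + b + 1 [MOD p]) : a = b ∨ a + b + 1 = p := by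
  have hdvd : (p : ℤ) ∣ ((b : ℤ) - a) * (b + a + 1) := by
    have := Nat.modEq_iff_dvd.mp h
    push_cast at this
    convert this using 1
    ring
  rcases (Nat.prime_iff_prime_int.mp hp).dvd_mul.mp hdvd with hba | hsum
  · exact Or.inl ((Nat.modEq_iff_dvd.mpr hba).eq_of_lt_of_lt ha hb)
  · right
    have hsum : p ∣ a + b + 1 := by rw [add_comm a]; exact_mod_cast hsum
    exact Nat.eq_of_dvd_of_lt_two_mul (Nat.succ_ne_zero _) hsum (by omega)

theorem eq_sq_of_factorizations_general (a b c d : ℕ) (hc : c.Prime)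
    (hcd : c > d) (hd1 : d > 1) (h1 : a ^ 2 + a + 1 = c * d) (h2 : b ^ 2 + b + 1 = c) :
    a = b ^ 2 ∧ ¬ a.Prime := by
  have hac : a < c := by nlinarith
  have hbc : b < c := by nlinarith
  have hmod : a ^ 2 + a + 1 ≡ b ^ 2 + b + 1 [MOD c] := by
    rw [h1, h2]
    simp [Nat.ModEq]
  obtain rfl | hsum := Nat.eq_or_add_add_one_eq_of_modEq hc hac hbc hmod
  · have : c * d = c * 1 := by rw [← h1, h2, mul_one]
    exact absurd (Nat.eq_of_mul_eq_mul_left hc.pos this) (by omega)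
  · have hab : a = b ^ 2 := by omega
    exact ⟨hab, hab ▸ Nat.Prime.not_prime_pow le_rfl⟩

/-- If `a, b, c, d` are positive integers with `c > d > 1`, `c` prime,
`a² + a + 1 = c·d` and `b² + b + 1 = c`, then `a = b²`; in particular `a` is not prime. -/
theorem eq_sq_of_factorizations (a b c d : ℕ) (ha : 0 < a) (hb : 0 < b) (hc : c.Prime)
    (hcd : c > d) (hd1 : d > 1) (h1 : a ^ 2 + a + 1 = c * d) (h2 : b ^ 2 + b + 1 = c) :
    a = b ^ 2 ∧ ¬ a.Prime :=
  eq_sq_of_factorizations_general a b c d hc hcd hd1 h1 h2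
end

section
/- There do not exist primes a, b, c, d, f, each an odd prime greater than 3, with c > d > f, such that a² + a + 1 = c·d and b² + b + 1 = c·f. -/
/-!
Since `c` divides both `a² + a + 1` and `b² + b + 1`, it divides their difference
`(a - b)(a + b + 1)`. Both `a` and `b` are below `c` and distinct, so `c = a + b + 1`.
Now `a, b ≡ 2 (mod 3)`, otherwise `3` would divide `a` or `c·d = a² + a + 1`, hence
`c ≡ 2 (mod 3)`; but every prime `p ≠ 3` dividing `n² + n + 1` is `≡ 1 (mod 3)`, because
`n` then has order `3` in `(ZMod p)ˣ`.
-/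

lemma Nat.Prime.mod_three_eq_one_of_dvd_sq_add_self_add_one {p n : ℕ} (hp : p.Prime)
    (hp3 : p ≠ 3) (hdvd : p ∣ n ^ 2 + n + 1) : p % 3 = 1 := by
  have : Fact p.Prime := ⟨hp⟩
  set x : ZMod p := (n : ZMod p)
  have hx : x ^ 2 + x + 1 = 0 := by
    simpa using (ZMod.natCast_eq_zero_iff _ _).2 hdvd
  have hx3 : x ^ 3 = 1 := by linear_combination (x - 1) * hx
  have hx1 : x ≠ 1 := by
    intro h
    rw [h] at hx
    have h3 : ((3 : ℕ) : ZMod p) = 0 := by push_cast; linear_combination hx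
    exact hp3 ((Nat.prime_dvd_prime_iff_eq hp Nat.prime_three).1
      ((ZMod.natCast_eq_zero_iff 3 p).1 h3))
  have hx0 : x ≠ 0 := by
    rintro h
    simp [h] at hx3
  have hord : orderOf x = 3 := orderOf_eq_prime hx3 hx1
  obtain ⟨k, hk⟩ : 3 ∣ p - 1 := hord ▸ ZMod.orderOf_dvd_card_sub_one hx0
  have := hp.two_le
  omega

lemma mod_three_eq_two_of_not_dvd {n : ℕ} (hn : ¬ 3 ∣ n) (hn' : ¬ 3 ∣ n ^ 2 + n + 1) :
    n % 3 = 2 := by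
  have h1 : n % 3 ≠ 1 := by
    intro h
    obtain ⟨k, rfl⟩ : ∃ k, n = 3 * k + 1 := ⟨n / 3, by omega⟩
    exact hn' ⟨3 * k ^ 2 + 3 * k + 1, by ring⟩
  omega

lemma Nat.Prime.not_three_dvd {p : ℕ} (hp : p.Prime) (hp3 : p ≠ 3) : ¬ 3 ∣ p :=
  fun h => hp3 ((Nat.prime_dvd_prime_iff_eq Nat.prime_three hp).1 h).symm

lemma mod_three_eq_two_of_sq_add_self_add_one_eq_mul {a c d : ℕ} (ha : a.Prime) (ha3 : a ≠ 3)
    (hc : c.Prime) (hc3 : c ≠ 3) (hd : d.Prime) (hd3 : d ≠ 3) (h : a ^ 2 + a + 1 = c * d) :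
    a % 3 = 2 := by
  refine mod_three_eq_two_of_not_dvd (ha.not_three_dvd ha3) ?_
  rw [h, Nat.prime_three.dvd_mul]
  exact not_or.2 ⟨hc.not_three_dvd hc3, hd.not_three_dvd hd3⟩

lemma Nat.Prime.eq_add_add_one_of_dvd_sq_add_self_add_one {p a b : ℕ} (hp : p.Prime)
    (ha : a < p) (hb : b < p) (hab : a ≠ b) (hpa : p ∣ a ^ 2 + a + 1)
    (hpb : p ∣ b ^ 2 + b + 1) : p = a + b + 1 := by
  have hprod : (p : ℤ) ∣ ((a : ℤ) - b) * (a + b + 1) := by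
    have ha' : (p : ℤ) ∣ (a : ℤ) ^ 2 + a + 1 := by exact_mod_cast hpa
    have hb' : (p : ℤ) ∣ (b : ℤ) ^ 2 + b + 1 := by exact_mod_cast hpb
    rw [show ((a : ℤ) - b) * (a + b + 1) = (a ^ 2 + a + 1) - (b ^ 2 + b + 1) by ring]
    exact _root_.dvd_sub ha' hb'
  -- `a - b` is a nonzero integer of absolute value below `p`
  have hsum : p ∣ a + b + 1 := by
    rcases (Nat.prime_iff_prime_int.mp hp).dvd_mul.1 hprod with hdiff | hsum
    · have := Int.eq_zero_of_abs_lt_dvd hdiff (by rw [abs_sub_lt_iff]; omega)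
      omega
    · exact_mod_cast hsum
  obtain ⟨k, hk⟩ := hsum
  rcases k with _ | _ | k
  · omega
  · omega
  · nlinarith

/-- There do not exist odd primes `a, b, c, d, f`, each greater than 3, with `c > d > f`,
such that `a² + a + 1 = c·d` and `b² + b + 1 = c·f`. -/
theorem no_shared_largest_prime_S22 :
    ¬ ∃ a b c d f : ℕ, a.Prime ∧ b.Prime ∧ c.Prime ∧ d.Prime ∧ f.Prime ∧
      Odd a ∧ Odd b ∧ Odd c ∧ Odd d ∧ Odd f ∧
      3 < a ∧ 3 < b ∧ 3 < c ∧ 3 < d ∧ 3 < f ∧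
      c > d ∧ d > f ∧
      a ^ 2 + a + 1 = c * d ∧ b ^ 2 + b + 1 = c * f := by
  rintro ⟨a, b, c, d, f, ha, hb, hc, hd, hf, -, -, -, -, -, ha3, hb3, hc3, hd3, hf3,
    hcd, hdf, hca, hcb⟩
  have hac : a < c := by nlinarith
  have hbc : b < c := by nlinarith
  have hab : a ≠ b := by
    rintro rfl
    have : d = f := Nat.eq_of_mul_eq_mul_left (by omega) (hca.symm.trans hcb)
    omega
  have hsum : c = a + b + 1 :=
    hc.eq_add_add_one_of_dvd_sq_add_self_add_one hac hbc hab ⟨d, hca⟩ ⟨f, hcb⟩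
  have hc1 : c % 3 = 1 :=
    hc.mod_three_eq_one_of_dvd_sq_add_self_add_one (by omega) ⟨d, hca⟩
  have ha2 := mod_three_eq_two_of_sq_add_self_add_one_eq_mul ha (by omega) hc (by omega) hd
    (by omega) hca
  have hb2 := mod_three_eq_two_of_sq_add_self_add_one_eq_mul hb (by omega) hc (by omega) hf
    (by omega) hcb
  omega
end

section
/- Suppose a, b, c, and d are odd primes with c > d and d ≠ 3 satisfying a² + a + 1 = c·d and b² + b + 1 = 3·c. Then there does not exist an odd prime g and a positive integer h, with h = 1 or h an odd prime, such that g² + g + 1 = d·h and d > h. -/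
/-!
Modulo a prime `p` the roots of `X² + X + 1` come in pairs `x, -1 - x`, so two residues `x, y < p`
of such roots satisfy `x = y` or `x + y + 1 = p`. Applied modulo `c` to `a` and `b` this gives
`c = a + b + 1`, and then `a = d + m` with `m² + m + 1 = 3d`, where `m` is even. Applied modulo `d`
to `g` and `m` it gives `g = m` or `g + m + 1 = d`, both impossible by parity.
-/

theorem eq_or_add_add_one_eq_of_prime_dvd {p x y : ℕ} (hp : p.Prime) (hx : x < p) (hy : y < p)
    (hpx : p ∣ x ^ 2 + x + 1) (hpy : p ∣ y ^ 2 + y + 1) : x = y ∨ x + y + 1 = p := by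
  have : Fact p.Prime := ⟨hp⟩
  have hfactor : ((x : ZMod p) - y) * (x + y + 1) = 0 := by
    have hx0 : ((x ^ 2 + x + 1 : ℕ) : ZMod p) = 0 := (ZMod.natCast_eq_zero_iff _ _).mpr hpx
    have hy0 : ((y ^ 2 + y + 1 : ℕ) : ZMod p) = 0 := (ZMod.natCast_eq_zero_iff _ _).mpr hpy
    push_cast at hx0 hy0
    linear_combination hx0 - hy0
  rcases mul_eq_zero.mp hfactor with hxy | hsum
  · left
    rw [sub_eq_zero, ZMod.natCast_eq_natCast_iff'] at hxy
    rwa [Nat.mod_eq_of_lt hx, Nat.mod_eq_of_lt hy] at hxy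
  · right
    have hdvd : p ∣ x + y + 1 := (ZMod.natCast_eq_zero_iff _ _).mp (by exact_mod_cast hsum)
    exact Nat.eq_of_dvd_of_lt_two_mul (Nat.succ_ne_zero _) hdvd (by omega)

theorem exists_eq_add_and_sq_add_add_one_eq_three_mul {a b c d : ℕ}
    (h1 : a ^ 2 + a + 1 = c * d) (h2 : b ^ 2 + b + 1 = 3 * c) (habc : a + b + 1 = c) :
    ∃ m, a = d + m ∧ m ^ 2 + m + 1 = 3 * d := by
  subst habc
  have hda : d ≤ a := by
    by_contra! had
    nlinarith [Nat.mul_le_mul_right (a + b + 1) had]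
  obtain ⟨m, rfl⟩ := Nat.exists_eq_add_of_le hda
  -- after multiplying by `c = d + m + b + 1` the claim is a combination of `h1` and `h2`
  refine ⟨m, rfl, Nat.eq_of_mul_eq_mul_left (Nat.succ_pos (d + m + b)) ?_⟩
  zify at h1 h2 ⊢
  linear_combination (↑m + ↑b + 1 : ℤ) * h1 + ↑d * h2

theorem unique_between_S1_and_S2_general (a b c d : ℕ)
    (hc : c.Prime) (hd : d.Prime)
    (hao : Odd a) (hdo : Odd d)
    (hcd : c > d) (hd3 : d ≠ 3)
    (h1 : a ^ 2 + a + 1 = c * d) (h2 : b ^ 2 + b + 1 = 3 * c) :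
    ¬ ∃ g h : ℕ, g.Prime ∧ Odd g ∧ (h = 1 ∨ (h.Prime ∧ Odd h)) ∧
      g ^ 2 + g + 1 = d * h ∧ d > h := by
  rintro ⟨g, h, -, hgo, -, hg, hdh⟩
  have hac : a < c := by nlinarith
  have hbc : b < c := by nlinarith [hc.two_le]
  have hab : a ≠ b := by
    rintro rfl
    exact hd3 (Nat.eq_of_mul_eq_mul_left hc.pos (by rw [← h1, h2, mul_comm]))
  have habc : a + b + 1 = c := by
    have hroots := eq_or_add_add_one_eq_of_prime_dvd hc hac hbc ⟨d, h1⟩ ⟨3, by rw [h2, mul_comm]⟩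
    exact hroots.resolve_left hab
  obtain ⟨m, rfl, hm⟩ := exists_eq_add_and_sq_add_add_one_eq_three_mul h1 h2 habc
  have hmd : m < d := by nlinarith [hd.two_le]
  have hgd : g < d := by nlinarith
  have hme : Even m := (Nat.odd_add.mp hao).mp hdo
  obtain ⟨i, rfl⟩ := hgo
  obtain ⟨j, rfl⟩ := hme
  obtain ⟨k, rfl⟩ := hdo
  rcases eq_or_add_add_one_eq_of_prime_dvd hd hgd hmd ⟨h, hg⟩ ⟨3, by rw [hm, mul_comm]⟩ with
    hgm | hgm <;> omega

/-- If `a, b, c, d` are odd primes with `c > d`, `d ≠ 3`, `a² + a + 1 = c·d` and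
`b² + b + 1 = 3·c`, then there is no odd prime `g` and positive integer `h`
(with `h = 1` or `h` an odd prime) such that `g² + g + 1 = d·h` and `d > h`. -/
theorem unique_between_S1_and_S2 (a b c d : ℕ)
    (ha : a.Prime) (hb : b.Prime) (hc : c.Prime) (hd : d.Prime)
    (hao : Odd a) (hbo : Odd b) (hco : Odd c) (hdo : Odd d)
    (hcd : c > d) (hd3 : d ≠ 3)
    (h1 : a ^ 2 + a + 1 = c * d) (h2 : b ^ 2 + b + 1 = 3 * c) :
    ¬ ∃ g h : ℕ, g.Prime ∧ Odd g ∧ (h = 1 ∨ (h.Prime ∧ Odd h)) ∧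
      g ^ 2 + g + 1 = d * h ∧ d > h :=
  unique_between_S1_and_S2_general a b c d hc hd hao hdo hcd hd3 h1 h2
end

section
/- Let a, b, d, e, and f be positive integers, with a, b, and d prime, satisfying a² + a + 1 = 3·d·e, b² + b + 1 = d·f, and d > e > f. Then d = a + b + 1 and a − b = 3e − f. -/
/-!
Subtracting the two equations gives `(a - b)(a + b + 1) = d(3e - f)`, so the prime `d` divides
`a - b` or `a + b + 1`. The size conditions give `b < d` and `a < 2d`, and `a`, `b`, `d` are all
odd (`a = 2` or `b = 2` is ruled out by a finite check). Hence the even number `a - b` is a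
multiple of `d` of absolute value below `2d`, i.e. `0`, which contradicts `e > f`; and the odd
number `a + b + 1 < 3d` is a multiple of `d`, i.e. `d` itself. Cancelling `d` gives `a - b = 3e - f`.
-/

theorem Int.eq_zero_of_dvd_of_even_of_abs_lt {d n : ℤ} (hd : Odd d) (hn : Even n) (hdn : d ∣ n)
    (h : |n| < 2 * d) : n = 0 := by
  obtain ⟨k, rfl⟩ := hdn
  have hk : Even k := (Int.even_mul.mp hn).resolve_left (Int.not_even_iff_odd.mpr hd)
  obtain ⟨j, rfl⟩ := hk
  have hj : d * j = 0 := Int.eq_zero_of_abs_lt_dvd (dvd_mul_right d j) (by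
    rw [← two_mul, mul_left_comm, abs_mul] at h
    simpa using h)
  rw [mul_add, hj, add_zero]

theorem Nat.eq_of_dvd_of_odd_of_lt_three_mul {d n : ℕ} (hn : Odd n) (hdn : d ∣ n)
    (h : n < 3 * d) : n = d := by
  obtain ⟨k, rfl⟩ := hdn
  obtain ⟨j, rfl⟩ := (Nat.odd_mul.mp hn).2
  have hj : j = 0 := by nlinarith
  simp [hj]

theorem ne_two_of_sq_add_add_one_eq {a b d e f : ℕ} (hd : d.Prime)
    (h1 : a ^ 2 + a + 1 = 3 * d * e) (h2 : b ^ 2 + b + 1 = d * f) (hde : d > e) (hef : e > f) :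
    b ≠ 2 := by
  rintro rfl
  have hd7 : d = 7 :=
    (Nat.prime_dvd_prime_iff_eq hd Nat.prime_seven).mp ⟨f, by omega⟩
  subst hd7
  have ha : a < 12 := by nlinarith
  interval_cases a <;> omega

theorem factorization_lemma_two_general (a b d e f : ℕ)
    (ha : a.Prime) (hb : b.Prime) (hd : d.Prime)
    (h1 : a ^ 2 + a + 1 = 3 * d * e) (h2 : b ^ 2 + b + 1 = d * f)
    (hde : d > e) (hef : e > f) :
    d = a + b + 1 ∧ (a : ℤ) - b = 3 * (e : ℤ) - f := by
  have hd_odd : Odd d := hd.odd_of_ne_two (by rintro rfl; omega)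
  have ha_odd : Odd a := ha.odd_of_ne_two (by rintro rfl; rw [mul_assoc] at h1; omega)
  have hb_odd : Odd b := hb.odd_of_ne_two (ne_two_of_sq_add_add_one_eq hd h1 h2 hde hef)
  have hbd : b < d := by nlinarith
  have had : a < 2 * d := by nlinarith
  have key : ((a : ℤ) - b) * ((a + b + 1 : ℕ) : ℤ) = d * (3 * e - f) := by
    have h1' : (a : ℤ) ^ 2 + a + 1 = 3 * d * e := by exact_mod_cast h1
    have h2' : (b : ℤ) ^ 2 + b + 1 = d * f := by exact_mod_cast h2
    push_cast
    linear_combination h1' - h2'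
  rcases (Nat.prime_iff_prime_int.mp hd).dvd_or_dvd ⟨_, key⟩ with hab | hab
  · have hab_even : Even ((a : ℤ) - b) :=
      (Int.odd_coe_nat a |>.mpr ha_odd).sub_odd (Int.odd_coe_nat b |>.mpr hb_odd)
    have : (a : ℤ) - b = 0 :=
      Int.eq_zero_of_dvd_of_even_of_abs_lt (by exact_mod_cast hd_odd) hab_even hab
        (abs_lt.mpr ⟨by omega, by omega⟩)
    obtain rfl : a = b := by omega
    nlinarith
  · have hdeq : a + b + 1 = d :=
      Nat.eq_of_dvd_of_odd_of_lt_three_mul (by simp [parity_simps, ha_odd, hb_odd])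
        (Int.natCast_dvd_natCast.mp hab) (by omega)
    refine ⟨hdeq.symm, mul_left_cancel₀ (Int.natCast_ne_zero.mpr hd.ne_zero) ?_⟩
    rwa [hdeq, mul_comm] at key

/-- If `a, b, d` are primes and `e, f` positive integers with `a² + a + 1 = 3·d·e`,
`b² + b + 1 = d·f` and `d > e > f`, then `d = a + b + 1` and `a − b = 3e − f`. -/
theorem factorization_lemma_two (a b d e f : ℕ)
    (ha : a.Prime) (hb : b.Prime) (hd : d.Prime) (he : 0 < e) (hf : 0 < f)
    (h1 : a ^ 2 + a + 1 = 3 * d * e) (h2 : b ^ 2 + b + 1 = d * f)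
    (hde : d > e) (hef : e > f) :
    d = a + b + 1 ∧ (a : ℤ) - b = 3 * (e : ℤ) - f :=
  factorization_lemma_two_general a b d e f ha hb hd h1 h2 hde hef
end

section
/- Let a, b, d, e, and f be positive integers, with a, b, and d prime, satisfying a² + a + 1 = 3·d·e, b² + b + 1 = 3·d·f, and d ≥ e > f. Then d = (a + b + 1)/3 (i.e., 3d = a + b + 1) and a − b = e − f. -/
/-!
Reducing modulo 3 gives `a ≡ b ≡ 1`, hence `a² + a + 1 ≡ 3 (mod 9)` and `d ≠ 3`. Subtracting the
two equations, `(a - b)(a + b + 1) = 3d(e - f)`, so the prime `d` divides `a - b` or `a + b + 1`.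
As `a² < 3de ≤ 3d²`, `a < 2d`; so `d ∣ a - b` would force `a - b = d`, impossible since
`3 ∣ a - b`. Hence `3d ∣ a + b + 1 < 6d`, i.e. `a + b + 1 = 3d`, and cancelling `3d` gives
`a - b = e - f`.
-/

theorem Nat.mod_three_eq_one_of_three_dvd_sq_add_self_add_one {n : ℕ}
    (h : 3 ∣ n ^ 2 + n + 1) : n % 3 = 1 := by
  have := Nat.mod_lt n (by norm_num : 3 > 0)
  rw [Nat.dvd_iff_mod_eq_zero, Nat.add_mod, Nat.add_mod (n ^ 2), Nat.pow_mod] at h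
  interval_cases n % 3 <;> simp_all

theorem Nat.not_nine_dvd_sq_add_self_add_one (n : ℕ) : ¬ 9 ∣ n ^ 2 + n + 1 := by
  have := Nat.mod_lt n (by norm_num : 9 > 0)
  rw [Nat.dvd_iff_mod_eq_zero, Nat.add_mod, Nat.add_mod (n ^ 2), Nat.pow_mod]
  interval_cases n % 9 <;> simp

theorem Nat.strictMono_sq_add_self_add_one : StrictMono fun n : ℕ ↦ n ^ 2 + n + 1 :=
  fun _ _ h ↦ by dsimp only; gcongr

theorem Nat.sq_add_self_add_one_eq_add_sub_mul {a b : ℕ} (h : b ≤ a) :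
    a ^ 2 + a + 1 = b ^ 2 + b + 1 + (a - b) * (a + b + 1) := by
  obtain ⟨c, rfl⟩ := Nat.exists_eq_add_of_le h
  rw [Nat.add_sub_cancel_left]
  ring

theorem Nat.three_mul_eq_add_add_one_of_sq_add_self_add_one {a b d e f : ℕ} (hd : d.Prime)
    (h1 : a ^ 2 + a + 1 = 3 * d * e) (h2 : b ^ 2 + b + 1 = 3 * d * f)
    (hde : e ≤ d) (hef : f < e) : 3 * d = a + b + 1 := by
  have ha3 :=
    Nat.mod_three_eq_one_of_three_dvd_sq_add_self_add_one (h1 ▸ (dvd_mul_right 3 d).mul_right e)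
  have hb3 :=
    Nat.mod_three_eq_one_of_three_dvd_sq_add_self_add_one (h2 ▸ (dvd_mul_right 3 d).mul_right f)
  have hd3 : d ≠ 3 := by
    rintro rfl
    exact Nat.not_nine_dvd_sq_add_self_add_one a (h1 ▸ dvd_mul_right 9 e)
  have hba : b < a := Nat.strictMono_sq_add_self_add_one.lt_iff_lt.mp <| by
    simp only [h1, h2]
    exact Nat.mul_lt_mul_of_pos_left hef (Nat.mul_pos three_pos hd.pos)
  -- `a² < 3de ≤ 3d² < (2d)²`
  have ha2d : a < 2 * d := by nlinarith
  have hdvd : d ∣ (a - b) * (a + b + 1) := by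
    rw [← Nat.dvd_add_right (h2 ▸ (dvd_mul_left d 3).mul_right f),
      ← Nat.sq_add_self_add_one_eq_add_sub_mul hba.le, h1]
    exact (dvd_mul_left d 3).mul_right e
  rcases hd.dvd_mul.mp hdvd with hsub | hadd
  · have hsub_eq : a - b = d := Nat.eq_of_dvd_of_lt_two_mul (by omega) hsub (by omega)
    have h3d : 3 ∣ d :=
      hsub_eq ▸ Nat.dvd_of_mod_eq_zero (Nat.sub_mod_eq_zero_of_mod_eq (ha3.trans hb3.symm))
    exact absurd ((Nat.prime_dvd_prime_iff_eq Nat.prime_three hd).mp h3d).symm hd3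
  · have hcop : Nat.Coprime 3 d := (Nat.coprime_primes Nat.prime_three hd).mpr hd3.symm
    have h3dvd : 3 * d ∣ a + b + 1 := hcop.mul_dvd_of_dvd_of_dvd (by omega) hadd
    exact (Nat.eq_of_dvd_of_lt_two_mul (by omega) h3dvd (by omega)).symm

theorem factorization_lemma_three_general (a b d e f : ℕ)
    (hd : d.Prime)
    (h1 : a ^ 2 + a + 1 = 3 * d * e) (h2 : b ^ 2 + b + 1 = 3 * d * f)
    (hde : d ≥ e) (hef : e > f) :
    3 * d = a + b + 1 ∧ (a : ℤ) - b = (e : ℤ) - f := by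
  have hsum := Nat.three_mul_eq_add_add_one_of_sq_add_self_add_one hd h1 h2 hde hef
  refine ⟨hsum, ?_⟩
  have hsumℤ : (3 * d : ℤ) = a + b + 1 := by exact_mod_cast hsum
  have h1ℤ : (a ^ 2 + a + 1 : ℤ) = 3 * d * e := by exact_mod_cast h1
  have h2ℤ : (b ^ 2 + b + 1 : ℤ) = 3 * d * f := by exact_mod_cast h2
  have hprod : (a - b : ℤ) * (3 * d) = (e - f) * (3 * d) := by
    linear_combination h1ℤ - h2ℤ + (a - b : ℤ) * hsumℤ
  have hd0 : (3 * d : ℤ) ≠ 0 := by exact_mod_cast (Nat.mul_pos three_pos hd.pos).ne'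
  exact mul_right_cancel₀ hd0 hprod

/-- If `a, b, d` are primes and `e, f` positive integers with `a² + a + 1 = 3·d·e`,
`b² + b + 1 = 3·d·f` and `d ≥ e > f`, then `3d = a + b + 1` and `a − b = e − f`. -/
theorem factorization_lemma_three (a b d e f : ℕ)
    (ha : a.Prime) (hb : b.Prime) (hd : d.Prime) (he : 0 < e) (hf : 0 < f)
    (h1 : a ^ 2 + a + 1 = 3 * d * e) (h2 : b ^ 2 + b + 1 = 3 * d * f)
    (hde : d ≥ e) (hef : e > f) :
    3 * d = a + b + 1 ∧ (a : ℤ) - b = (e : ℤ) - f :=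
  factorization_lemma_three_general a b d e f hd h1 h2 hde hef
end

section
/- There do not exist pairwise distinct odd primes a, b, c, d, e, f, g satisfying a² + a + 1 = 3·d·e, b² + b + 1 = 3·d·f, c² + c + 1 = 3·d·g, and d ≥ e > f > g. -/
/-!
Modulo the prime `d`, each of `a, b, c` is a root of `X² + X + 1`, which has at most two roots
in a field, so two of them are congruent mod `d`. But `e, f, g ≤ d` forces `a, b, c < 2d`, and two
odd numbers below `2d` that are congruent modulo the odd number `d` are congruent modulo `2d`,
hence equal.
-/

theorem eq_or_add_add_one_eq_zero_of_sq_add_self_eq {R : Type*} [CommRing R] [NoZeroDivisors R]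
    {x y : R} (h : x ^ 2 + x = y ^ 2 + y) : x = y ∨ x + y + 1 = 0 := by
  have hfactor : (x - y) * (x + y + 1) = 0 := by linear_combination h
  exact (mul_eq_zero.mp hfactor).imp_left sub_eq_zero.mp

theorem eq_or_eq_or_eq_of_sq_add_self_eq {R : Type*} [CommRing R] [NoZeroDivisors R]
    {x y z : R} (hxy : x ^ 2 + x = y ^ 2 + y) (hxz : x ^ 2 + x = z ^ 2 + z) :
    x = y ∨ x = z ∨ y = z := by
  rcases eq_or_add_add_one_eq_zero_of_sq_add_self_eq hxy with h | hy
  · exact Or.inl h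
  rcases eq_or_add_add_one_eq_zero_of_sq_add_self_eq hxz with h | hz
  · exact Or.inr (Or.inl h)
  exact Or.inr (Or.inr (by linear_combination hy - hz))

theorem Nat.eq_of_modEq_of_odd_of_lt_two_mul {d x y : ℕ} (hd : Odd d) (hx : Odd x) (hy : Odd y)
    (hxd : x < 2 * d) (hyd : y < 2 * d) (h : x ≡ y [MOD d]) : x = y := by
  have h2 : x ≡ y [MOD 2] := (Nat.odd_iff.mp hx).trans (Nat.odd_iff.mp hy).symm
  have h2d : x ≡ y [MOD 2 * d] :=
    (Nat.modEq_and_modEq_iff_modEq_mul (Nat.coprime_two_left.mpr hd)).mp ⟨h2, h⟩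
  exact h2d.eq_of_lt_of_lt hxd hyd

theorem lt_two_mul_of_sq_add_self_add_one_eq {x d k : ℕ} (h : x ^ 2 + x + 1 = 3 * d * k)
    (hk : k ≤ d) : x < 2 * d := by
  nlinarith

theorem ZMod.sq_add_self_eq_neg_one_of_eq_mul {x d k : ℕ} (h : x ^ 2 + x + 1 = 3 * d * k) :
    (x : ZMod d) ^ 2 + x = -1 := by
  have hcast := congrArg (Nat.cast : ℕ → ZMod d) h
  push_cast [ZMod.natCast_self] at hcast
  linear_combination hcast

/-- There do not exist pairwise distinct odd primes `a, b, c, d, e, f, g` satisfying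
`a² + a + 1 = 3·d·e`, `b² + b + 1 = 3·d·f`, `c² + c + 1 = 3·d·g`, and `d ≥ e > f > g`. -/
theorem semi_linked_in_S31 :
    ¬ ∃ a b c d e f g : ℕ,
      a.Prime ∧ b.Prime ∧ c.Prime ∧ d.Prime ∧ e.Prime ∧ f.Prime ∧ g.Prime ∧
      Odd a ∧ Odd b ∧ Odd c ∧ Odd d ∧ Odd e ∧ Odd f ∧ Odd g ∧
      [a, b, c, d, e, f, g].Pairwise (· ≠ ·) ∧
      a ^ 2 + a + 1 = 3 * d * e ∧
      b ^ 2 + b + 1 = 3 * d * f ∧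
      c ^ 2 + c + 1 = 3 * d * g ∧
      d ≥ e ∧ e > f ∧ f > g := by
  rintro ⟨a, b, c, d, e, f, g, -, -, -, hd, -, -, -, ha, hb, hc, hd_odd, -, -, -, hdistinct,
    hae, hbf, hcg, hde, hef, hfg⟩
  have := Fact.mk hd
  simp only [List.pairwise_cons, List.mem_cons, List.not_mem_nil,
    forall_eq_or_imp] at hdistinct
  obtain ⟨⟨hab, hac, -⟩, ⟨hbc, -⟩, -⟩ := hdistinct
  have hinj : ∀ {x y}, Odd x → Odd y → x < 2 * d → y < 2 * d → (x : ZMod d) = y → x = y :=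
    fun hx hy hxd hyd h => Nat.eq_of_modEq_of_odd_of_lt_two_mul hd_odd hx hy hxd hyd
      ((ZMod.natCast_eq_natCast_iff _ _ _).mp h)
  have ha_lt := lt_two_mul_of_sq_add_self_add_one_eq hae hde
  have hb_lt := lt_two_mul_of_sq_add_self_add_one_eq hbf (by omega)
  have hc_lt := lt_two_mul_of_sq_add_self_add_one_eq hcg (by omega)
  have hra := ZMod.sq_add_self_eq_neg_one_of_eq_mul hae
  have hrb := ZMod.sq_add_self_eq_neg_one_of_eq_mul hbf
  have hrc := ZMod.sq_add_self_eq_neg_one_of_eq_mul hcg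
  rcases eq_or_eq_or_eq_of_sq_add_self_eq (hra.trans hrb.symm) (hra.trans hrc.symm) with h | h | h
  · exact hab (hinj ha hb ha_lt hb_lt h)
  · exact hac (hinj ha hc ha_lt hc_lt h)
  · exact hbc (hinj hb hc hb_lt hc_lt h)
end

section
/- Let Ψ_r(X) = 1 + X + X² + ⋯ + X^(r−1), let r be an odd positive integer, and let t be an odd prime. If r ≡ −1 (mod 2t), then the cyclotomic polynomial Φ_{2t}(X) divides the composition Φ_t(Ψ_r(X)) in ℤ[X]. -/
open Polynomial

/-!
Let `ζ` be a primitive `2t`-th root of unity. Since `ζ^(r+1) = 1`, the geometric sum gives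
`Ψ_r(ζ) = (ζ^r - 1)/(ζ - 1) = (-ζ)⁻¹`, and for odd `t` the element `-ζ` is a primitive `t`-th
root of unity. Hence `Ψ_r(ζ)` is a root of `Φ_t`, so `ζ` is a root of `Φ_t ∘ Ψ_r`, and the minimal
polynomial `Φ_{2t}` of `ζ` over `ℤ` divides it.
-/

theorem IsPrimitiveRoot.neg_of_odd {R : Type*} [CommRing R] [NoZeroDivisors R] {ζ : R} {n : ℕ}
    (h : IsPrimitiveRoot ζ (2 * n)) (hn : Odd n) : IsPrimitiveRoot (-ζ) n := by
  have hζn : ζ ^ n = -1 :=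
    (h.pow (by have := hn.pos; omega) (mul_comm 2 n)).eq_neg_one_of_two_right
  refine ⟨by rw [hn.neg_pow, hζn, neg_neg], fun l hl => ?_⟩
  have h2l : ζ ^ (2 * l) = 1 := by
    rw [← (even_two_mul l).neg_pow, pow_mul', hl, one_pow]
  exact Nat.dvd_of_mul_dvd_mul_left two_pos (h.dvd_of_pow_eq_one _ h2l)

theorem geom_sum_eq_neg_inv_of_pow_succ_eq_one {K : Type*} [Field K] {x : K} (hx : x ≠ 1)
    {r : ℕ} (hr : x ^ (r + 1) = 1) : ∑ i ∈ Finset.range r, x ^ i = (-x)⁻¹ := by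
  have hx0 : x ≠ 0 := by rintro rfl; simp at hr
  rw [geom_sum_eq hx, div_eq_iff (sub_ne_zero.2 hx)]
  field_simp
  linear_combination hr

theorem IsPrimitiveRoot.cyclotomic_dvd_of_aeval_eq_zero {K : Type*} [Field K] [CharZero K]
    {μ : K} {n : ℕ} (h : IsPrimitiveRoot μ n) (hpos : 0 < n) {p : ℤ[X]} (hp : aeval μ p = 0) :
    cyclotomic n ℤ ∣ p := by
  rw [cyclotomic_eq_minpoly h hpos]
  exact minpoly.isIntegrallyClosed_dvd (h.isIntegral hpos) hp

theorem cyclotomic_dvd_comp_general (r t : ℕ) (hto : Odd t) (hmod : (r : ℤ) ≡ -1 [ZMOD (2 * t)]) :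
    cyclotomic (2 * t) ℤ ∣ (cyclotomic t ℤ).comp (∑ i ∈ Finset.range r, (X : ℤ[X]) ^ i) := by
  have hpos : 0 < 2 * t := by have := hto.pos; omega
  obtain ⟨ζ, hζ⟩ : ∃ ζ : ℂ, IsPrimitiveRoot ζ (2 * t) :=
    ⟨_, Complex.isPrimitiveRoot_exp _ hpos.ne'⟩
  have hζr : ζ ^ (r + 1) = 1 := by
    have hdvd : ((2 * t : ℕ) : ℤ) ∣ (r : ℤ) + 1 := by
      simpa using hmod.symm.dvd
    exact_mod_cast (hζ.zpow_eq_one_iff_dvd _).2 hdvd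
  have hΨ : aeval ζ (∑ i ∈ Finset.range r, (X : ℤ[X]) ^ i) = (-ζ)⁻¹ := by
    simpa using geom_sum_eq_neg_inv_of_pow_succ_eq_one (hζ.ne_one (by omega)) hζr
  refine hζ.cyclotomic_dvd_of_aeval_eq_zero hpos ?_
  rw [aeval_comp, hΨ, aeval_def, eval₂_eq_eval_map, map_cyclotomic]
  exact ((hζ.neg_of_odd hto).inv).isRoot_cyclotomic hto.pos

/-- Let `Ψ_r(X) = 1 + X + ⋯ + X^(r−1)`, let `r` be an odd positive integer, and let `t`
be an odd prime. If `r ≡ −1 (mod 2t)`, then `Φ_{2t}(X)` divides `Φ_t(Ψ_r(X))` in `ℤ[X]`. -/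
theorem cyclotomic_dvd_comp (r t : ℕ) (hr : 0 < r) (hro : Odd r) (ht : t.Prime)
    (hto : Odd t) (hmod : (r : ℤ) ≡ -1 [ZMOD (2 * t)]) :
    cyclotomic (2 * t) ℤ ∣ (cyclotomic t ℤ).comp (∑ i ∈ Finset.range r, (X : ℤ[X]) ^ i) :=
  cyclotomic_dvd_comp_general r t hto hmod
end
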